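/- Let M, L be integers, β ≥ 2 an integer, and U ∈ ℤ. If |M| ≤ (β−1)/2 and |L| ≤ (β−1)/4, then for z = Uβ + M + L/β we have round(z) − β·round(z/β) = M. -/

import Mathlib

/-!
Write `z = n + x` with `n = Uβ + M` an integer and `x = L/β`. Since `|x| < 1/2`, the first
rounding returns `n`. Dividing by `β` gives `z/β = U + (M + x)/β`, and `|M + x| < β/2`, so the
second rounding returns `U`; hence the difference is `Uβ + M - βU = M`.
-/

section RoundPerturbation

variable {α : Type*} [Field α] [LinearOrder α] [IsStrictOrderedRing α] [FloorRing α]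

theorem round_intCast_add_of_abs_lt {x : α} (hx : |x| < 1 / 2) (n : ℤ) :
    round ((n : α) + x) = n := by
  have hx0 : round x = 0 :=
    round_eq_zero_iff.2 ⟨by linarith [neg_abs_le x], by linarith [le_abs_self x]⟩
  rw [round_intCast_add, hx0, add_zero]

theorem round_add_sub_mul_round_div {β : ℤ} (hβ : 0 < β) (U M : ℤ) {x : α}
    (hx : |x| < 1 / 2) (hMx : |M + x| < β / 2) :
    round ((U : α) * β + M + x) - β * round (((U : α) * β + M + x) / β) = M := by
  have hβα : (0 : α) < β := Int.cast_pos.2 hβ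
  have hfirst : round ((U : α) * β + M + x) = U * β + M := by
    simpa using round_intCast_add_of_abs_lt hx (U * β + M)
  have hquot : ((U : α) * β + M + x) / β = U + (M + x) / β := by
    field_simp
    ring
  have hsecond : round (((U : α) * β + M + x) / β) = U := by
    rw [hquot, round_intCast_add_of_abs_lt]
    rwa [abs_div, abs_of_pos hβα, div_lt_iff₀ hβα, div_mul_eq_mul_div, one_mul]
  rw [hfirst, hsecond]
  ring

end RoundPerturbation

/-- Combination of integer slack with the two-round extractor: under the integer
bounds `|M| ≤ (β−1)/2` and `|L| ≤ (β−1)/4`, the extractor applied to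
`z = Uβ + M + L/β` returns `M` exactly. -/
theorem integer_slack_extractor (β U M L : ℤ) (hβ : 2 ≤ β)
    (hM : (|M| : ℝ) ≤ ((β : ℝ) - 1) / 2)
    (hL : (|L| : ℝ) ≤ ((β : ℝ) - 1) / 4)
    (z : ℝ) (hz : z = (U : ℝ) * β + M + (L : ℝ) / β) :
    round z - β * round (z / β) = M := by
  have hβℝ : (0 : ℝ) < β := by exact_mod_cast (by omega : 0 < β)
  have hx : |(L : ℝ) / β| < 1 / 2 := by
    rw [abs_div, abs_of_pos hβℝ, div_lt_iff₀ hβℝ]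
    linarith
  have hMx : |(M : ℝ) + L / β| < β / 2 :=
    calc |(M : ℝ) + L / β| ≤ |(M : ℝ)| + |(L : ℝ) / β| := abs_add_le _ _
      _ < ((β : ℝ) - 1) / 2 + 1 / 2 := add_lt_add_of_le_of_lt hM hx
      _ = β / 2 := by ring
  subst hz
  exact round_add_sub_mul_round_div (by omega) U M hx hMx
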